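/- arXiv:2006.06467 — 5 statements merged into one kernel-verified Lean document; each statement's English description precedes it below -/
import Mathlib

section
/- Let μ be a probability distribution on ℝ^d, let 0 < α < 1 and A > 0, and let η : ℝ^d → [0, 1/2] be a measurable function such that for every 0 < t ≤ 1/2, μ({x : η(x) ≥ 1/2 − t}) ≤ A · t^{α/(1−α)}. Then for every measurable set S ⊆ ℝ^d, E_{x∼μ}[1_S(x) · (1 − 2η(x))] ≥ C_α^A · (μ(S))^{1/α}, where C_α^A := α · ((1−α)/A)^{(1−α)/α}. -/
/-!
Threshold the margin at `t := ((1 - α) μ(S) / A) ^ ((1 - α) / α)`, chosen so that the margin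
condition gives `μ {η ≥ 1/2 - t} ≤ A t ^ (α / (1 - α)) = (1 - α) μ(S)`; the condition at `t = 1/2`
forces `A (1/2) ^ (α / (1 - α)) ≥ 1`, so `t ≤ 1/2` is admissible. The part of `S` where
`η < 1/2 - t` then has mass at least `α μ(S)`, and there the integrand `1 - 2η` exceeds `2t`,
so the integral is at least `2 t α μ(S) ≥ C_α^A μ(S) ^ (1 / α)`.
-/

open MeasureTheory

section RpowAlgebra

variable {α A m : ℝ}

lemma mul_rpow_rpow_eq_one_sub_mul (hα : 0 < α) (hα1 : α < 1) (hA : 0 < A) (hm : 0 ≤ m) :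
    A * (((1 - α) * m / A) ^ ((1 - α) / α)) ^ (α / (1 - α)) = (1 - α) * m := by
  have h1α : 0 < 1 - α := by linarith
  rw [← inv_div (1 - α) α, Real.rpow_rpow_inv (by positivity) (by positivity)]
  field_simp

lemma mul_rpow_mul_rpow_one_div_eq (hα : 0 < α) (hα1 : α < 1) (hA : 0 < A) (hm : 0 ≤ m) :
    α * ((1 - α) / A) ^ ((1 - α) / α) * m ^ (1 / α)
      = α * m * ((1 - α) * m / A) ^ ((1 - α) / α) := by
  have h1α : 0 < 1 - α := by linarith
  have hsplit : (1 : ℝ) / α = 1 + (1 - α) / α := by field_simp; ring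
  rw [hsplit, Real.rpow_add' hm (by rw [← hsplit]; positivity), Real.rpow_one,
    mul_div_right_comm, Real.mul_rpow (by positivity) hm]
  ring

end RpowAlgebra

section Margin

variable {Ω : Type*} [MeasurableSpace Ω] {μ : Measure Ω}

lemma integral_indicator_one_mul (g : Ω → ℝ) {S : Set Ω} (hS : MeasurableSet S) :
    ∫ x, S.indicator (fun _ => (1 : ℝ)) x * g x ∂μ = ∫ x in S, g x ∂μ := by
  simp_rw [← Set.indicator_mul_left, one_mul]
  exact integral_indicator hS

lemma mul_measureReal_le_setIntegral {g : Ω → ℝ} (hgm : Measurable g) (hg0 : ∀ x, 0 ≤ g x)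
    {S : Set Ω} (hgi : IntegrableOn g S μ) (ε : ℝ) :
    ε * μ.real ({x | ε ≤ g x} ∩ S) ≤ ∫ x in S, g x ∂μ := by
  rw [← measureReal_restrict_apply (measurableSet_le measurable_const hgm)]
  exact mul_meas_ge_le_integral_of_nonneg (ae_of_all _ hg0) hgi ε

variable {η : Ω → ℝ}

lemma two_mul_measureReal_margin_le_setIntegral [IsFiniteMeasure μ] (hηm : Measurable η)
    (hη0 : ∀ x, 0 ≤ η x) (hη2 : ∀ x, η x ≤ 1 / 2) (S : Set Ω) {t : ℝ} (ht : 0 ≤ t) :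
    2 * t * μ.real (S \ {x | 1 / 2 - t ≤ η x}) ≤ ∫ x in S, 1 - 2 * η x ∂μ := by
  have hg0 : ∀ x, 0 ≤ 1 - 2 * η x := fun x => by linarith [hη2 x]
  have hint : IntegrableOn (fun x => 1 - 2 * η x) S μ :=
    (Integrable.of_bound (by fun_prop) 1 (ae_of_all _ fun x => by
      rw [Real.norm_of_nonneg (hg0 x)]; linarith [hη0 x])).integrableOn
  have hsub : S \ {x | 1 / 2 - t ≤ η x} ⊆ {x | 2 * t ≤ 1 - 2 * η x} ∩ S :=
    fun x ⟨hxS, hx⟩ => ⟨by simp only [Set.mem_ofPred_eq, not_le] at hx ⊢; linarith, hxS⟩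
  calc 2 * t * μ.real (S \ {x | 1 / 2 - t ≤ η x})
      ≤ 2 * t * μ.real ({x | 2 * t ≤ 1 - 2 * η x} ∩ S) :=
        mul_le_mul_of_nonneg_left (measureReal_mono hsub) (by positivity)
    _ ≤ ∫ x in S, 1 - 2 * η x ∂μ := mul_measureReal_le_setIntegral (by fun_prop) hg0 hint _

lemma one_le_mul_half_rpow_of_margin [IsProbabilityMeasure μ] {α A : ℝ} (hη0 : ∀ x, 0 ≤ η x)
    (hTsy : ∀ t : ℝ, 0 < t → t ≤ 1 / 2 →
      (μ {x | 1 / 2 - t ≤ η x}).toReal ≤ A * t ^ (α / (1 - α))) :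
    1 ≤ A * (1 / 2) ^ (α / (1 - α)) := by
  have huniv : {x | 1 / 2 - 1 / 2 ≤ η x} = Set.univ :=
    Set.eq_univ_of_forall fun x => by simpa using hη0 x
  have h := hTsy (1 / 2) (by norm_num) le_rfl
  rwa [huniv, measure_univ, ENNReal.toReal_one] at h

end Margin

theorem stmt1 {d : ℕ} (μ : Measure (EuclideanSpace ℝ (Fin d))) [IsProbabilityMeasure μ]
    (α A : ℝ) (hα : 0 < α) (hα1 : α < 1) (hA : 0 < A)
    (η : EuclideanSpace ℝ (Fin d) → ℝ)
    (hηm : Measurable η) (hη0 : ∀ x, 0 ≤ η x) (hη2 : ∀ x, η x ≤ 1/2)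
    (hTsy : ∀ t : ℝ, 0 < t → t ≤ 1/2 →
      (μ {x | 1/2 - t ≤ η x}).toReal ≤ A * t ^ (α / (1 - α)))
    (S : Set (EuclideanSpace ℝ (Fin d))) (hS : MeasurableSet S) :
    α * ((1 - α) / A) ^ ((1 - α) / α) * (μ S).toReal ^ (1 / α)
      ≤ ∫ x, S.indicator (fun _ => (1 : ℝ)) x * (1 - 2 * η x) ∂μ := by
  have h1α : 0 < 1 - α := by linarith
  rw [integral_indicator_one_mul _ hS]
  change _ * μ.real S ^ _ ≤ _
  rcases measureReal_nonneg.eq_or_lt with hm | hm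
  · rw [← hm, Real.zero_rpow (by positivity), mul_zero]
    exact setIntegral_nonneg hS fun x _ => by linarith [hη2 x]
  set m := μ.real S
  set t := ((1 - α) * m / A) ^ ((1 - α) / α)
  have ht0 : 0 < t := by positivity
  have hAt : A * t ^ (α / (1 - α)) = (1 - α) * m := mul_rpow_rpow_eq_one_sub_mul hα hα1 hA hm.le
  have ht : t ≤ 1 / 2 := by
    rw [← Real.rpow_le_rpow_iff ht0.le (by norm_num) (by positivity : 0 < α / (1 - α)),
      ← mul_le_mul_iff_right₀ hA, hAt]
    nlinarith [measureReal_le_one (μ := μ) (s := S), one_le_mul_half_rpow_of_margin hη0 hTsy]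
  have hmass : α * m ≤ μ.real (S \ {x | 1 / 2 - t ≤ η x}) := by
    have htail : μ.real {x | 1 / 2 - t ≤ η x} ≤ (1 - α) * m := hAt ▸ hTsy t ht0 ht
    linarith [le_measureReal_sdiff (μ := μ) (s₁ := S) (s₂ := {x | 1 / 2 - t ≤ η x})]
  rw [mul_rpow_mul_rpow_one_div_eq hα hα1 hA hm.le]
  calc α * m * t ≤ 2 * t * μ.real (S \ {x | 1 / 2 - t ≤ η x}) := by
        nlinarith [measureReal_nonneg (μ := μ) (s := S \ {x | 1 / 2 - t ≤ η x})]
    _ ≤ _ := two_mul_measureReal_margin_le_setIntegral hηm hη0 hη2 S ht0.le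
end

section
/- Let p(t) = ∑_{i=0}^k c_i t^i be a degree-k univariate polynomial over ℝ and let a, b ∈ ℝ. Define r(t) = p(a·t + b) = ∑_{i=0}^k d_i t^i. Then ∑_{i=0}^k d_i² ≤ (2 · max(1, |a|) · max(1, |b|))^{2k} · ∑_{i=0}^k c_i². -/
/-!
Write `p (a t + b)` as `q (a t)` with `q t = p (t + b)`. Scaling by `a` multiplies the `i`-th
coefficient by `a ^ i`, which costs at most `max 1 |a| ^ (2k)`. For the shift, the coefficients
of `q` are `d_i = ∑_j c_j C(j,i) b^(j-i)`, so by Cauchy–Schwarz `∑ d_i²` is at most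
`∑ c_j²` times `max 1 |b| ^ (2k) ∑_{j ≤ k} ∑_i C(j,i)² = max 1 |b| ^ (2k) ∑_{j ≤ k} C(2j,j)`,
and `∑_{j ≤ k} C(2j,j) ≤ 4^k`.
-/

open Polynomial Finset

namespace Nat

theorem two_mul_centralBinom_le_four_pow {n : ℕ} (hn : n ≠ 0) : 2 * centralBinom n ≤ 4 ^ n := by
  obtain ⟨m, rfl⟩ := exists_eq_succ_of_ne_zero hn
  have hsplit : centralBinom (m + 1) = 2 * (2 * m + 1).choose m := by
    rw [centralBinom_eq_two_mul_choose, show 2 * (m + 1) = 2 * m + 1 + 1 by ring,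
      choose_succ_succ', choose_symm_half]
    ring
  rw [hsplit, pow_succ]
  linarith [choose_middle_le_pow m]

theorem sum_range_centralBinom_le_four_pow (k : ℕ) :
    ∑ j ∈ range (k + 1), centralBinom j ≤ 4 ^ k := by
  induction k with
  | zero => simp
  | succ k ih =>
    have h := two_mul_centralBinom_le_four_pow (n := k + 1) (by omega)
    rw [pow_succ] at h
    rw [sum_range_succ, pow_succ]
    omega

theorem sum_range_choose_sq_of_le {j k : ℕ} (hjk : j ≤ k) :
    ∑ i ∈ range (k + 1), j.choose i ^ 2 = centralBinom j := by
  rw [centralBinom_eq_two_mul_choose, ← sum_range_choose_sq]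
  refine (sum_subset (range_subset_range.mpr (by omega)) fun i _ hi => ?_).symm
  rw [choose_eq_zero_of_lt (by simpa using hi), zero_pow two_ne_zero]

end Nat

section OrderedRing

variable {R : Type*} [CommRing R] [LinearOrder R] [IsStrictOrderedRing R]

theorem sq_pow_le_max_one_abs_pow {x : R} {i k : ℕ} (hik : i ≤ k) :
    (x ^ i) ^ 2 ≤ max 1 |x| ^ (2 * k) :=
  calc (x ^ i) ^ 2 = |x| ^ (2 * i) := by rw [← sq_abs, abs_pow, ← pow_mul, mul_comm]
    _ ≤ max 1 |x| ^ (2 * i) := pow_le_pow_left₀ (abs_nonneg x) (le_max_right _ _) _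
    _ ≤ max 1 |x| ^ (2 * k) := pow_le_pow_right₀ (le_max_left _ _) (by omega)

end OrderedRing

namespace Polynomial

theorem coeff_comp_X_add_C {R : Type*} [CommSemiring R] {p : R[X]} {k : ℕ}
    (hp : p.natDegree ≤ k) (b : R) (i : ℕ) :
    (p.comp (X + C b)).coeff i = ∑ j ∈ range (k + 1), p.coeff j * (b ^ (j - i) * j.choose i) := by
  conv_lhs => rw [p.as_sum_range' (k + 1) (by omega)]
  simp [sum_comp, coeff_X_add_C_pow]

variable {R : Type*} [CommRing R] [LinearOrder R] [IsStrictOrderedRing R]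

theorem sum_sq_coeff_comp_C_mul_X_le (p : R[X]) (a : R) (k : ℕ) :
    ∑ i ∈ range (k + 1), (p.comp (C a * X)).coeff i ^ 2
      ≤ max 1 |a| ^ (2 * k) * ∑ i ∈ range (k + 1), p.coeff i ^ 2 := by
  rw [mul_sum]
  refine sum_le_sum fun i hi => ?_
  rw [comp_C_mul_X_coeff, mul_pow, mul_comm]
  exact mul_le_mul_of_nonneg_right
    (sq_pow_le_max_one_abs_pow (Nat.lt_succ_iff.mp (mem_range.mp hi))) (sq_nonneg _)

theorem sum_sq_coeff_comp_X_add_C_le {p : R[X]} {k : ℕ} (hp : p.natDegree ≤ k) (b : R) :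
    ∑ i ∈ range (k + 1), (p.comp (X + C b)).coeff i ^ 2
      ≤ (2 * max 1 |b|) ^ (2 * k) * ∑ i ∈ range (k + 1), p.coeff i ^ 2 := by
  set S := ∑ i ∈ range (k + 1), p.coeff i ^ 2
  set w : ℕ → ℕ → R := fun i j => b ^ (j - i) * j.choose i
  have cauchy_schwarz (i : ℕ) :
      (p.comp (X + C b)).coeff i ^ 2 ≤ S * ∑ j ∈ range (k + 1), w i j ^ 2 := by
    rw [coeff_comp_X_add_C hp]
    exact sum_mul_sq_le_sq_mul_sq _ _ _
  have hw : ∑ i ∈ range (k + 1), ∑ j ∈ range (k + 1), w i j ^ 2 ≤ (2 * max 1 |b|) ^ (2 * k) :=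
    calc ∑ i ∈ range (k + 1), ∑ j ∈ range (k + 1), w i j ^ 2
        ≤ ∑ i ∈ range (k + 1), ∑ j ∈ range (k + 1), max 1 |b| ^ (2 * k) * (j.choose i : R) ^ 2 := by
          refine sum_le_sum fun i _ => sum_le_sum fun j hj => ?_
          rw [mul_pow]
          gcongr
          exact sq_pow_le_max_one_abs_pow (by simp at hj; omega)
      _ = max 1 |b| ^ (2 * k) * ∑ j ∈ range (k + 1), (j.centralBinom : R) := by
          rw [sum_comm, mul_sum]
          refine sum_congr rfl fun j hj => ?_
          rw [← mul_sum]
          congr 1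
          exact_mod_cast Nat.sum_range_choose_sq_of_le (by simp at hj; omega)
      _ ≤ max 1 |b| ^ (2 * k) * 4 ^ k := by
          gcongr
          exact_mod_cast Nat.sum_range_centralBinom_le_four_pow k
      _ = (2 * max 1 |b|) ^ (2 * k) := by rw [mul_pow, pow_mul (2 : R)]; norm_num [mul_comm]
  calc ∑ i ∈ range (k + 1), (p.comp (X + C b)).coeff i ^ 2
      ≤ ∑ i ∈ range (k + 1), S * ∑ j ∈ range (k + 1), w i j ^ 2 :=
        sum_le_sum fun i _ => cauchy_schwarz i
    _ ≤ S * (2 * max 1 |b|) ^ (2 * k) := by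
      rw [← mul_sum]
      exact mul_le_mul_of_nonneg_left hw (sum_nonneg fun i _ => sq_nonneg _)
    _ = (2 * max 1 |b|) ^ (2 * k) * S := mul_comm _ _

end Polynomial

theorem stmt6 {k : ℕ} (p : Polynomial ℝ) (hp : p.natDegree ≤ k) (a b : ℝ)
    (r : Polynomial ℝ)
    (hr : r = p.comp (Polynomial.C a * Polynomial.X + Polynomial.C b)) :
    ∑ i ∈ Finset.range (k + 1), (r.coeff i) ^ 2
      ≤ (2 * max 1 |a| * max 1 |b|) ^ (2 * k)
        * ∑ i ∈ Finset.range (k + 1), (p.coeff i) ^ 2 := by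
  have hr' : r = (p.comp (X + C b)).comp (C a * X) := by
    simp [hr, comp_assoc]
  calc ∑ i ∈ range (k + 1), r.coeff i ^ 2
      ≤ max 1 |a| ^ (2 * k) * ∑ i ∈ range (k + 1), (p.comp (X + C b)).coeff i ^ 2 := by
        rw [hr']
        exact sum_sq_coeff_comp_C_mul_X_le _ a k
    _ ≤ max 1 |a| ^ (2 * k) * ((2 * max 1 |b|) ^ (2 * k) * ∑ i ∈ range (k + 1), p.coeff i ^ 2) :=
        mul_le_mul_of_nonneg_left (sum_sq_coeff_comp_X_add_C_le hp b) (by positivity)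
    _ = (2 * max 1 |a| * max 1 |b|) ^ (2 * k) * ∑ i ∈ range (k + 1), p.coeff i ^ 2 := by
        ring
end

section
/- Let R > 0, W > 0, let k ≥ 1 be an integer, and define the affine map g(t) = 1 + 2·(t − R/4)/(W + R/4). Let T_k be the degree-k Chebyshev polynomial of the first kind. Then: (1) for every real t ≤ −W, (T_k(g(t)))² ≤ (2·g(t))^{2k}; (2) for every real t with −W ≤ t ≤ R/4, (T_k(g(t)))² ≤ 1; and (3) for every real t ≥ R/2, (T_k(g(t)))² ≥ (1/2) · (1 + √(R/(2W + R/2)))^{2k}. -/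
open Polynomial Polynomial.Chebyshev

private lemma cheb_id (y : ℝ) (hy : 1 ≤ y) (k : ℕ) :
    (T ℝ k).eval y
      = ((y + Real.sqrt (y^2-1))^k + (y - Real.sqrt (y^2-1))^k) / 2 := by
  have h1 : (0:ℝ) ≤ y^2 - 1 := by nlinarith
  have hs : (Real.sqrt (y^2-1))^2 = y^2 - 1 := Real.sq_sqrt h1
  set s := Real.sqrt (y^2-1) with hsdef
  induction k using Nat.twoStepInduction with
  | zero => simp
  | one => simp
  | more n ih1 ih2 =>
    have : ((n + 2 : ℕ) : ℤ) = (n : ℤ) + 2 := by push_cast; ring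
    rw [this, T_add_two]
    simp only [Polynomial.eval_sub, Polynomial.eval_mul, Polynomial.eval_ofNat,
      Polynomial.eval_X]
    have hn1 : ((n + 1 : ℕ) : ℤ) = (n : ℤ) + 1 := by push_cast; ring
    rw [hn1] at ih2
    rw [ih2, ih1]
    have e1 : (y+s)^(n+2) = (2*y)*(y+s)^(n+1) - ((y+s)*(y-s))*(y+s)^n := by ring
    have e2 : (y-s)^(n+2) = (2*y)*(y-s)^(n+1) - ((y+s)*(y-s))*(y-s)^n := by ring
    have hprod : (y+s)*(y-s) = 1 := by nlinarith
    rw [hprod] at e1 e2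
    rw [e1, e2]; ring

private lemma cheb_parity (x : ℝ) (k : ℕ) :
    (T ℝ k).eval (-x) = (-1)^k * (T ℝ k).eval x := by
  induction k using Nat.twoStepInduction with
  | zero => simp
  | one => simp
  | more n ih1 ih2 =>
    have hc : ((n + 2 : ℕ) : ℤ) = (n : ℤ) + 2 := by push_cast; ring
    have hn1 : ((n + 1 : ℕ) : ℤ) = (n : ℤ) + 1 := by push_cast; ring
    rw [hc, T_add_two]
    rw [hn1] at ih2
    simp only [Polynomial.eval_sub, Polynomial.eval_mul, Polynomial.eval_ofNat,
      Polynomial.eval_X] at *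
    rw [ih2, ih1]; ring

private lemma pow_add_inv_pow_mono (m a : ℝ) (hm : 1 ≤ m) (hma : m ≤ a) (k : ℕ) :
    m^k + (1/m)^k ≤ a^k + (1/a)^k := by
  have hm0 : (0:ℝ) < m := by linarith
  have ha0 : (0:ℝ) < a := by linarith
  have hMk : m^k ≤ a^k := pow_le_pow_left₀ (le_of_lt hm0) hma k
  have h1M : (1:ℝ) ≤ m^k := by
    have := pow_le_pow_left₀ zero_le_one hm k
    simpa using this
  have h1A : (1:ℝ) ≤ a^k := le_trans h1M hMk
  have hMk0 : (0:ℝ) < m^k := by positivity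
  have hAk0 : (0:ℝ) < a^k := by positivity
  rw [one_div, one_div, inv_pow, inv_pow]
  have key : a^k + (a^k)⁻¹ - (m^k + (m^k)⁻¹)
      = (a^k - m^k) * (1 - (m^k)⁻¹ * (a^k)⁻¹) := by
    field_simp
    ring
  have h2 : (m^k)⁻¹ * (a^k)⁻¹ ≤ 1 := by
    rw [← mul_inv]
    have h12 : (1:ℝ) ≤ m^k * a^k := by nlinarith
    exact inv_le_one_of_one_le₀ h12
  nlinarith [mul_nonneg (sub_nonneg.2 hMk) (sub_nonneg.2 h2)]

private lemma core_poly (P : ℝ) (hP : 1 ≤ P) : Real.sqrt 2 * P^6 ≤ P^7 + 1 := by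
  have hr2 : (Real.sqrt 2)^2 = 2 := Real.sq_sqrt (by norm_num)
  have hr0 : (0:ℝ) ≤ Real.sqrt 2 := Real.sqrt_nonneg 2
  have hr : Real.sqrt 2 ≤ 283/200 := by nlinarith
  have hq : 0 ≤ P - 1 := by linarith
  have key : (283/200 : ℝ) * P^6 ≤ P^7 + 1 := by
    nlinarith [mul_nonneg hq (sq_nonneg (P - 1 - 1/3)),
      sq_nonneg (P - 1 - 27/100), pow_nonneg hq 3, pow_nonneg hq 4,
      pow_nonneg hq 5, pow_nonneg hq 6, pow_nonneg hq 7,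
      mul_nonneg (pow_nonneg hq 3) hq]
  nlinarith [pow_nonneg (le_trans zero_le_one hP) 6]

set_option maxHeartbeats 800000 in
private lemma key1 (x : ℝ) (hx1 : x ≤ -1) (k : ℕ) :
    ((T ℝ k).eval x)^2 ≤ (2 * x)^(2*k) := by
  have hy : 1 ≤ -x := by linarith
  set y := -x with hydef
  have h1 : (0:ℝ) ≤ y^2 - 1 := by nlinarith
  have hs0 : 0 ≤ Real.sqrt (y^2-1) := Real.sqrt_nonneg _
  have hs : (Real.sqrt (y^2-1))^2 = y^2 - 1 := Real.sq_sqrt h1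
  set s := Real.sqrt (y^2-1) with hsdef
  have hsy : s ≤ y := by nlinarith
  have hTy : (T ℝ k).eval y = ((y+s)^k + (y-s)^k)/2 := cheb_id y hy k
  have hbound : (T ℝ k).eval y ≤ (2*y)^k := by
    rw [hTy]
    have h2 : (y+s)^k ≤ (2*y)^k := pow_le_pow_left₀ (by linarith) (by linarith) k
    have h3 : (y-s)^k ≤ (2*y)^k := pow_le_pow_left₀ (by linarith) (by linarith) k
    linarith
  have hpos : 0 ≤ (T ℝ k).eval y := by
    rw [hTy]
    have := pow_nonneg (by linarith : (0:ℝ) ≤ y+s) k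
    have := pow_nonneg (by linarith : (0:ℝ) ≤ y-s) k
    linarith
  have hsq : ((T ℝ k).eval y)^2 ≤ ((2*y)^k)^2 := by
    apply sq_le_sq'
    · nlinarith
    · exact hbound
  have heq : ((T ℝ k).eval x)^2 = ((T ℝ k).eval y)^2 := by
    have hp : (T ℝ k).eval y = (-1)^k * (T ℝ k).eval x := by
      rw [hydef]; exact cheb_parity x k
    rw [hp, mul_pow]
    rcases Nat.even_or_odd k with he | ho
    · rw [he.neg_one_pow]; ring
    · rw [ho.neg_one_pow]; ring
  rw [heq]
  calc ((T ℝ k).eval y)^2 ≤ ((2*y)^k)^2 := hsq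
    _ = (2*y)^(2*k) := by rw [← pow_mul, mul_comm k 2]
    _ = (2*x)^(2*k) := by
        rw [hydef]
        have h4 : (2*(-x)) = -(2*x) := by ring
        rw [h4, Even.neg_pow (even_two_mul k)]

set_option maxHeartbeats 4000000 in
private lemma key3 (u y : ℝ) (hu0 : 0 < u) (hyu : 1 + u^2 ≤ y) (k : ℕ) :
    (1/2) * (1 + u)^(2*k) ≤ ((T ℝ k).eval y)^2 := by
  have hu0' : (0:ℝ) ≤ u := le_of_lt hu0
  have hy1 : (1:ℝ) ≤ y := by nlinarith
  have h1 : (0:ℝ) ≤ y^2 - 1 := by nlinarith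
  have hs0 : 0 ≤ Real.sqrt (y^2-1) := Real.sqrt_nonneg _
  have hs : (Real.sqrt (y^2-1))^2 = y^2 - 1 := Real.sq_sqrt h1
  set s := Real.sqrt (y^2-1) with hsdef
  have hr2 : (Real.sqrt 2)^2 = 2 := Real.sq_sqrt (by norm_num)
  have hr0 : (0:ℝ) ≤ Real.sqrt 2 := Real.sqrt_nonneg 2
  have hr1 : (1:ℝ) ≤ Real.sqrt 2 := by nlinarith
  have h15 : Real.sqrt 2 ≤ 1.5 := by nlinarith
  have hslb : Real.sqrt 2 * u ≤ s := by
    have hsq : (Real.sqrt 2 * u)^2 ≤ s^2 := by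
      rw [mul_pow, hr2, hs]; nlinarith
    nlinarith [mul_nonneg hr0 hu0']
  set b : ℝ := 1 + u with hb
  set c : ℝ := 1 + (Real.sqrt 2 - 1)*u with hc
  have hb1 : 1 ≤ b := by rw [hb]; linarith
  have hc1 : 1 ≤ c := by rw [hc]; nlinarith
  have hwu2 : (0:ℝ) ≤ (Real.sqrt 2 - 1) * u^2 :=
    mul_nonneg (by linarith) (sq_nonneg u)
  have hwu2' : (Real.sqrt 2 - 1) * u^2 ≤ u^2 := by nlinarith [sq_nonneg u]
  have hmexp : b * c = 1 + Real.sqrt 2 * u + (Real.sqrt 2 - 1) * u^2 := by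
    rw [hb, hc]; ring
  have hm1 : 1 ≤ b * c := by
    rw [hmexp]; nlinarith [mul_nonneg hr0 hu0']
  have hma : b * c ≤ y + s := by rw [hmexp]; nlinarith
  have hid := cheb_id y hy1 k
  have hainv : y - s = 1/(y+s) := by
    have hprod : (y+s)*(y-s) = 1 := by nlinarith
    have hys0 : 0 < y + s := by linarith
    field_simp
    linarith [hprod]
  have h2T : 2 * (T ℝ k).eval y = (y+s)^k + (1/(y+s))^k := by
    rw [hid, ← hainv]; ring
  have hmono := pow_add_inv_pow_mono (b*c) (y+s) hm1 hma k
  -- b² ≤ c⁵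
  have hbc : b^2 ≤ c^5 := by
    have hw41 : (0.41 : ℝ) ≤ Real.sqrt 2 - 1 := by nlinarith
    have hexp : c^5 = 1 + 5*(Real.sqrt 2 - 1)*u + 10*(Real.sqrt 2 - 1)^2*u^2
        + 10*(Real.sqrt 2 - 1)^3*u^3 + 5*(Real.sqrt 2 - 1)^4*u^4
        + (Real.sqrt 2 - 1)^5*u^5 := by
      rw [hc]; ring
    have hbexp : b^2 = 1 + 2*u + u^2 := by rw [hb]; ring
    have t1 : 2*u ≤ 5*(Real.sqrt 2 - 1)*u := by nlinarith
    have t2 : u^2 ≤ 10*(Real.sqrt 2 - 1)^2*u^2 := by nlinarith [sq_nonneg u]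
    have t3 : (0:ℝ) ≤ 10*(Real.sqrt 2 - 1)^3*u^3 := by positivity
    have t4 : (0:ℝ) ≤ 5*(Real.sqrt 2 - 1)^4*u^4 := by positivity
    have t5 : (0:ℝ) ≤ (Real.sqrt 2 - 1)^5*u^5 := by positivity
    rw [hexp, hbexp]; linarith
  set P : ℝ := c^k with hP
  set Q : ℝ := b^k with hQ
  have hP1 : 1 ≤ P := by
    have := pow_le_pow_left₀ zero_le_one hc1 k; simpa [hP] using this
  have hQ1 : 1 ≤ Q := by
    have := pow_le_pow_left₀ zero_le_one hb1 k; simpa [hQ] using this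
  have hQ2 : Q^2 ≤ P^5 := by
    rw [hP, hQ, ← pow_mul, ← pow_mul, mul_comm k 2, mul_comm k 5,
      pow_mul, pow_mul]
    exact pow_le_pow_left₀ (by positivity) hbc k
  have hcore := core_poly P hP1
  have hmk : (b*c)^k = P * Q := by rw [hP, hQ, ← mul_pow]; ring_nf
  have hkey : Real.sqrt 2 * Q ≤ P*Q + 1/(P*Q) := by
    have hPQ0 : 0 < P*Q := by nlinarith
    rw [← sub_nonneg]
    have e : P*Q + 1/(P*Q) - Real.sqrt 2 * Q
        = (P*Q*(P*Q) + 1 - Real.sqrt 2 * Q * (P*Q)) / (P*Q) := by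
      field_simp
    rw [e]
    apply div_nonneg _ (le_of_lt hPQ0)
    rcases le_or_gt (Real.sqrt 2) P with hcase | hcase
    · nlinarith [mul_nonneg (mul_nonneg (by linarith : (0:ℝ) ≤ P)
        (sub_nonneg.2 hcase)) (sq_nonneg Q)]
    · have h6 : (Real.sqrt 2 - P) * P * Q^2 ≤ (Real.sqrt 2 - P) * P * P^5 := by
        apply mul_le_mul_of_nonneg_left hQ2
        apply mul_nonneg (by linarith) (by linarith)
      nlinarith [sq_nonneg Q, sq_nonneg (P*Q)]
  have hfinal : Real.sqrt 2 * Q ≤ 2 * (T ℝ k).eval y := by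
    rw [h2T]
    have hinv : (1/(b*c))^k = 1/(P*Q) := by
      rw [one_div, inv_pow, hmk, one_div]
    calc Real.sqrt 2 * Q ≤ P*Q + 1/(P*Q) := hkey
      _ = (b*c)^k + (1/(b*c))^k := by rw [hmk, hinv]
      _ ≤ (y+s)^k + (1/(y+s))^k := hmono
  have hQpos : 0 < Real.sqrt 2 * Q := by nlinarith
  have hsqle : (Real.sqrt 2 * Q)^2 ≤ (2 * (T ℝ k).eval y)^2 :=
    pow_le_pow_left₀ (le_of_lt hQpos) hfinal 2
  have hexpQ : Q^2 = (1 + u)^(2*k) := by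
    rw [hQ, hb, ← pow_mul, mul_comm k 2]
  nlinarith [hsqle, hexpQ]

theorem stmt8 (R W : ℝ) (hR : 0 < R) (hW : 0 < W) (k : ℕ) (hk : 1 ≤ k)
    (g : ℝ → ℝ) (hg : ∀ t, g t = 1 + 2 * (t - R / 4) / (W + R / 4)) :
    (∀ t : ℝ, t ≤ -W →
        ((Polynomial.Chebyshev.T ℝ k).eval (g t)) ^ 2 ≤ (2 * g t) ^ (2 * k))
      ∧ (∀ t : ℝ, -W ≤ t → t ≤ R / 4 →
          ((Polynomial.Chebyshev.T ℝ k).eval (g t)) ^ 2 ≤ 1)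
      ∧ (∀ t : ℝ, R / 2 ≤ t →
          (1 / 2) * (1 + Real.sqrt (R / (2 * W + R / 2))) ^ (2 * k)
            ≤ ((Polynomial.Chebyshev.T ℝ k).eval (g t)) ^ 2) := by
  have hden : (0:ℝ) < W + R/4 := by linarith
  refine ⟨?_, ?_, ?_⟩
  · intro t ht
    apply key1
    rw [hg t]
    have h2 : 2*(t - R/4)/(W + R/4) ≤ -2 := by
      rw [div_le_iff₀ hden]; nlinarith
    linarith
  · intro t ht1 ht2
    have hxlb : -1 ≤ g t := by
      rw [hg t]
      have h2 : (-2 : ℝ) ≤ 2*(t - R/4)/(W + R/4) := by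
        rw [le_div_iff₀ hden]; nlinarith
      linarith
    have hxub : g t ≤ 1 := by
      rw [hg t]
      have h2 : 2*(t - R/4)/(W + R/4) ≤ 0 := by
        apply div_nonpos_of_nonpos_of_nonneg <;> linarith
      linarith
    have hcos : Real.cos (Real.arccos (g t)) = g t := Real.cos_arccos hxlb hxub
    have hT := T_real_cos (Real.arccos (g t)) (k : ℤ)
    rw [hcos] at hT
    rw [hT]
    have h1 := Real.neg_one_le_cos (((k : ℤ) : ℝ) * Real.arccos (g t))
    have h2 := Real.cos_le_one (((k : ℤ) : ℝ) * Real.arccos (g t))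
    nlinarith
  · intro t ht
    have hδpos : 0 < R / (2*W + R/2) := div_pos hR (by linarith)
    have hu0 : 0 < Real.sqrt (R / (2*W + R/2)) := Real.sqrt_pos.mpr hδpos
    have hu2 : (Real.sqrt (R / (2*W + R/2)))^2 = R / (2*W + R/2) :=
      Real.sq_sqrt (le_of_lt hδpos)
    have hyδ : 1 + (Real.sqrt (R / (2*W + R/2)))^2 ≤ g t := by
      rw [hu2, hg t]
      have h2 : R / (2*W + R/2) ≤ 2*(t - R/4)/(W + R/4) := by
        rw [div_le_div_iff₀ (by linarith) hden]
        nlinarith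
      linarith
    exact key3 _ _ hu0 hyδ k
end

section
/- Let X be a real-valued random variable with Pr[|X| ≥ s] ≤ B·e^{−βs} for all s > 0, where B, β > 0. Let k ≥ 1 be an integer, let R > 0, set W = 8k/β, and define g(t) = 1 + 2·(t − R/4)/(W + R/4). Then E[(2·g(X))^{2k} · 1{X ≤ −W}] ≤ B · (2^{2k} e^{−8k} + (2k)^{−2k} (2k)!) ≤ B. -/
/-!
On `{x ≤ -W}` the value `-2 g(x)` lies in `[2, -4x/W - 2]`, so `-2 g(x) ≥ t` forces
`|x| ≥ (t + 2) W / 4`, an event of probability at most `B e^{-4k} e^{-2kt}` since `βW = 8k`.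
By the layer-cake formula `∫ f^p = p ∫₀^∞ t^(p-1) μ{f ≥ t} dt`, this exponential tail gives the
moment bound `B e^{-4k} Γ(2k+1) / (2k)^{2k}`, already below the claimed one. For the second claim,
`2^{2k} e^{-8k} ≤ 1/2` because `e ≥ 2`, and `n! / n^n ≤ 1/n ≤ 1/2` because `n! ≤ n^{n-1}`.
-/

open MeasureTheory Set Real Nat

theorem Nat.factorial_succ_le_pow (m : ℕ) : (m + 1)! ≤ (m + 1) ^ m := by
  rw [← descFactorial_self, descFactorial_succ, Nat.add_sub_cancel_left, one_mul]
  exact descFactorial_le_pow _ _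

theorem inv_pow_mul_factorial_le_half {n : ℕ} (hn : 2 ≤ n) : (n : ℝ)⁻¹ ^ n * n ! ≤ 1 / 2 := by
  obtain ⟨m, rfl⟩ : ∃ m, n = m + 1 := ⟨n - 1, by omega⟩
  have hfac : ((m + 1)! : ℝ) ≤ ((m + 1 : ℕ) : ℝ) ^ m := by
    exact_mod_cast Nat.factorial_succ_le_pow m
  have hpos : (0 : ℝ) < (m + 1 : ℕ) := by positivity
  calc ((m + 1 : ℕ) : ℝ)⁻¹ ^ (m + 1) * (m + 1)!
      ≤ ((m + 1 : ℕ) : ℝ)⁻¹ ^ (m + 1) * ((m + 1 : ℕ) : ℝ) ^ m := by gcongr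
    _ = ((m + 1 : ℕ) : ℝ)⁻¹ := by rw [inv_pow, pow_succ]; field_simp
    _ ≤ 1 / 2 := by rw [one_div]; gcongr; exact_mod_cast hn

theorem two_pow_mul_exp_neg_le_half {k : ℕ} (hk : 1 ≤ k) :
    (2 : ℝ) ^ (2 * k) * exp (-(8 * k)) ≤ 1 / 2 := by
  have h2e : (2 : ℝ) ≤ exp 1 := by linarith [exp_one_gt_d9]
  have hexp : (2 : ℝ) ^ (8 * k) ≤ exp (8 * k) := by
    calc (2 : ℝ) ^ (8 * k) ≤ exp 1 ^ (8 * k) := by gcongr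
      _ = exp (8 * k) := by rw [← exp_nat_mul]; push_cast; ring_nf
  rw [exp_neg, ← div_eq_mul_inv, div_le_iff₀ (exp_pos _)]
  calc (2 : ℝ) ^ (2 * k) ≤ 2 ^ (8 * k) / 2 := by
        rw [le_div_iff₀ two_pos, ← pow_succ]; exact pow_le_pow_right₀ one_le_two (by omega)
    _ ≤ 1 / 2 * exp (8 * k) := by linarith

theorem lintegral_Ioi_rpow_sub_one_mul_exp_neg {p a : ℝ} (hp : 0 < p) (ha : 0 < a) :
    ∫⁻ t in Ioi 0, ENNReal.ofReal (t ^ (p - 1) * exp (-(a * t))) =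
      ENNReal.ofReal ((1 / a) ^ p * Gamma p) := by
  rw [← ofReal_integral_eq_lintegral_ofReal, integral_rpow_mul_exp_neg_mul_Ioi hp ha]
  · simpa [IntegrableOn] using
      integrableOn_rpow_mul_exp_neg_mul_rpow (p := 1) (by linarith) zero_lt_one ha
  · filter_upwards [ae_restrict_mem measurableSet_Ioi] with t (ht : 0 < t)
    positivity

theorem lintegral_rpow_le_of_meas_le_exp {α : Type*} [MeasurableSpace α] {μ : Measure α}
    {f : α → ℝ} (hf_nn : 0 ≤ᵐ[μ] f) (hf : AEMeasurable f μ) {p a : ℝ} (hp : 0 < p) (ha : 0 < a)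
    {D : ENNReal} (htail : ∀ t > 0, μ {x | t ≤ f x} ≤ D * ENNReal.ofReal (exp (-(a * t)))) :
    ∫⁻ x, ENNReal.ofReal (f x ^ p) ∂μ ≤ D * ENNReal.ofReal (Gamma (p + 1) / a ^ p) := by
  rw [lintegral_rpow_eq_lintegral_meas_le_mul μ hf_nn hf hp]
  calc ENNReal.ofReal p * ∫⁻ t in Ioi 0, μ {x | t ≤ f x} * ENNReal.ofReal (t ^ (p - 1))
      ≤ ENNReal.ofReal p * ∫⁻ t in Ioi 0, D * ENNReal.ofReal (t ^ (p - 1) * exp (-(a * t))) := by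
        gcongr ENNReal.ofReal p * ?_
        refine setLIntegral_mono' measurableSet_Ioi fun t (ht : 0 < t) => ?_
        rw [ENNReal.ofReal_mul (by positivity), mul_comm (ENNReal.ofReal _), ← mul_assoc]
        gcongr
        exact htail t ht
    _ = D * ENNReal.ofReal (p * ((1 / a) ^ p * Gamma p)) := by
        rw [lintegral_const_mul _ (by fun_prop), lintegral_Ioi_rpow_sub_one_mul_exp_neg hp ha,
          ENNReal.ofReal_mul hp.le, mul_left_comm]
    _ = D * ENNReal.ofReal (Gamma (p + 1) / a ^ p) := by
        rw [Gamma_add_one hp.ne', one_div, inv_rpow ha.le]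
        ring_nf

theorem measure_restrict_Iic_le_mul_exp {ν : Measure ℝ} [IsFiniteMeasure ν] {B β W a : ℝ}
    (hW : 0 < W) (hβW : β * W = 4 * a)
    (htail : ∀ s : ℝ, 0 < s → (ν {x | s ≤ |x|}).toReal ≤ B * exp (-β * s))
    {f : ℝ → ℝ} (hf : ∀ x ≤ -W, f x ≤ -4 * x / W - 2) {t : ℝ} (ht : 0 < t) :
    ν.restrict (Iic (-W)) {x | t ≤ f x} ≤
      ENNReal.ofReal (B * exp (-(2 * a))) * ENNReal.ofReal (exp (-(a * t))) := by
  have hsub : {x | t ≤ f x} ∩ Iic (-W) ⊆ {x | (t + 2) * W / 4 ≤ |x|} := by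
    rintro x ⟨htx : t ≤ f x, hxW : x ≤ -W⟩
    have hx : t + 2 ≤ -4 * x / W := by linarith [hf x hxW]
    rw [le_div_iff₀ hW] at hx
    change _ ≤ |x|
    rw [abs_of_neg (by linarith)]
    linarith
  rw [Measure.restrict_apply' measurableSet_Iic, ← ENNReal.ofReal_mul' (exp_pos _).le, mul_assoc,
    ← exp_add, show -(2 * a) + -(a * t) = -β * ((t + 2) * W / 4) by
      linear_combination hβW * (t + 2) / 4,
    ← ENNReal.ofReal_toReal (measure_ne_top ν _)]
  exact (ENNReal.ofReal_le_ofReal (measureReal_mono hsub)).trans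
    (ENNReal.ofReal_le_ofReal (htail _ (by positivity)))

theorem neg_two_mul_one_add_div_mem_Icc {W r x : ℝ} (hW : 0 < W) (hr : 0 ≤ r) (hx : x ≤ -W) :
    -(2 * (1 + 2 * (x - r) / (W + r))) ∈ Icc 2 (-4 * x / W - 2) := by
  have hWr : 0 < W + r := by positivity
  have hlower : 1 ≤ (r - x) / (W + r) := by rw [le_div_iff₀ hWr]; linarith
  have hupper : (r - x) / (W + r) ≤ -x / W := by
    rw [div_le_div_iff₀ hWr hW]; nlinarith
  rw [show -(2 * (1 + 2 * (x - r) / (W + r))) = 4 * ((r - x) / (W + r)) - 2 by ring,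
    mul_div_assoc, neg_mul, ← mul_neg, ← neg_div]
  constructor <;> linarith

theorem stmt10 (ν : Measure ℝ) [IsProbabilityMeasure ν]
    (B β : ℝ) (hB : 0 < B) (hβ : 0 < β)
    (htail : ∀ s : ℝ, 0 < s → (ν {x | s ≤ |x|}).toReal ≤ B * Real.exp (-β * s))
    (k : ℕ) (hk : 1 ≤ k) (R : ℝ) (hR : 0 < R)
    (W : ℝ) (hW : W = 8 * k / β)
    (g : ℝ → ℝ) (hg : ∀ t, g t = 1 + 2 * (t - R / 4) / (W + R / 4)) :
    (∫⁻ x in {x : ℝ | x ≤ -W}, ENNReal.ofReal ((2 * g x) ^ (2 * k)) ∂ν)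
        ≤ ENNReal.ofReal (B * (2 ^ (2 * k) * Real.exp (-(8 * k))
            + ((2 * k : ℝ))⁻¹ ^ (2 * k) * (Nat.factorial (2 * k))))
      ∧ B * (2 ^ (2 * k) * Real.exp (-(8 * k))
            + ((2 * k : ℝ))⁻¹ ^ (2 * k) * (Nat.factorial (2 * k))) ≤ B := by
  have hWpos : 0 < W := by rw [hW]; positivity
  have hβW : β * W = 4 * ((2 * k : ℕ) : ℝ) := by rw [hW]; push_cast; field_simp; ring
  have hf (x : ℝ) (hx : x ≤ -W) : -(2 * g x) ∈ Icc 2 (-4 * x / W - 2) :=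
    hg x ▸ neg_two_mul_one_add_div_mem_Icc hWpos (by positivity) hx
  have hf_nn : 0 ≤ᵐ[ν.restrict (Iic (-W))] fun x => -(2 * g x) :=
    (ae_restrict_iff' measurableSet_Iic).2 (.of_forall fun x hx => zero_le_two.trans (hf x hx).1)
  have hfact := inv_pow_mul_factorial_le_half (n := 2 * k) (by omega)
  push_cast at hfact
  refine ⟨?_, mul_le_of_le_one_right hB.le (by linarith [two_pow_mul_exp_neg_le_half hk])⟩
  calc ∫⁻ x in Iic (-W), ENNReal.ofReal ((2 * g x) ^ (2 * k)) ∂ν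
      = ∫⁻ x in Iic (-W), ENNReal.ofReal ((-(2 * g x)) ^ ((2 * k : ℕ) : ℝ)) ∂ν := by
        simp_rw [rpow_natCast, (even_two_mul k).neg_pow]
    _ ≤ ENNReal.ofReal (B * exp (-(2 * ((2 * k : ℕ) : ℝ)))) *
          ENNReal.ofReal (Gamma ((2 * k : ℕ) + 1) / ((2 * k : ℕ) : ℝ) ^ ((2 * k : ℕ) : ℝ)) :=
        lintegral_rpow_le_of_meas_le_exp hf_nn (by rw [funext hg]; fun_prop)
          (by positivity) (by positivity)
          fun t ht => measure_restrict_Iic_le_mul_exp hWpos hβW htail (fun x hx => (hf x hx).2) ht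
    _ ≤ _ := by
        rw [← ENNReal.ofReal_mul' (by positivity), Gamma_nat_eq_factorial, rpow_natCast]
        refine ENNReal.ofReal_le_ofReal ?_
        push_cast
        rw [div_eq_mul_inv, ← inv_pow, mul_comm ((2 * k)! : ℝ)]
        have hexp : exp (-(2 * (2 * k))) ≤ 1 := exp_le_one_iff.2 (by simp)
        have hX : 0 ≤ (2 * (k : ℝ))⁻¹ ^ (2 * k) * (2 * k)! := by positivity
        linarith [mul_nonneg (mul_nonneg hB.le (sub_nonneg.2 hexp)) hX,
          mul_nonneg hB.le (by positivity : (0 : ℝ) ≤ 2 ^ (2 * k) * exp (-(8 * k)))]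
end

section
/- Let V ⊆ ℝ^n be a nonempty closed convex set with diameter at most K (i.e., ‖u − v‖₂ ≤ K for all u, v ∈ V). Let ℓ_1, …, ℓ_T : ℝ^n → ℝ be functions, each convex on V and differentiable on an open set containing V, and suppose ‖∇ℓ_t(w)‖₂ ≤ G for all w ∈ V and all t ∈ [T], where G > 0. Pick any w_1 ∈ V and define iterates by w_{t+1} = Π_V(w_t − η_t ∇ℓ_t(w_t)) with step sizes η_t = K/(G√t), where Π_V denotes the Euclidean projection (nearest-point map) onto V. Then for every u ∈ V, ∑_{t=1}^T (ℓ_t(w_t) − ℓ_t(u)) ≤ (3/2) · G · K · √T. -/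
/-!
Zinkevich's analysis of projected online gradient descent. Projecting onto a convex set does not
increase the distance to its points, so with `a_t = ‖w_t - u‖²` convexity of `ℓ_t` gives
`ℓ_t(w_t) - ℓ_t(u) ≤ ⟪∇ℓ_t(w_t), w_t - u⟫ ≤ (a_t - a_{t+1}) / (2η_t) + η_t G² / 2`.
As `1 / η_t` is nondecreasing and `a_t ≤ K²`, Abel summation bounds the first terms by
`K² / (2η_T) = GK√T / 2`, and `∑ 1/√t ≤ 2√T` bounds the second ones by `GK√T`.
-/

open Finset
open scoped RealInnerProductSpace

theorem sum_Icc_one_div_sqrt_le (T : ℕ) :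
    ∑ t ∈ Icc 1 T, 1 / √(t : ℝ) ≤ 2 * √(T : ℝ) := by
  induction T with
  | zero => simp
  | succ S ih =>
    rw [sum_Icc_succ_top (by omega)]
    -- `(√(S+1) - √S)(√(S+1) + √S) = 1` and `√(S+1) + √S ≤ 2√(S+1)`
    have hpos : 0 < √((S + 1 : ℕ) : ℝ) := by positivity
    have hmono : √(S : ℝ) ≤ √((S + 1 : ℕ) : ℝ) := Real.sqrt_le_sqrt (by push_cast; linarith)
    have hsq : √((S + 1 : ℕ) : ℝ) ^ 2 = √(S : ℝ) ^ 2 + 1 := by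
      rw [Real.sq_sqrt (by positivity), Real.sq_sqrt (by positivity)]; push_cast; ring
    have : 1 / √((S + 1 : ℕ) : ℝ) ≤ 2 * √((S + 1 : ℕ) : ℝ) - 2 * √(S : ℝ) := by
      rw [div_le_iff₀ hpos]; nlinarith
    linarith

theorem sum_Icc_mul_sub_succ_le {c a : ℕ → ℝ} {D : ℝ} {T : ℕ} (hc : Monotone c) (hc0 : 0 ≤ c 0)
    (haD : ∀ t ∈ Icc 1 (T + 1), a t ≤ D) (ha0 : 0 ≤ a (T + 1)) :
    ∑ t ∈ Icc 1 T, c t * (a t - a (t + 1)) ≤ c T * D := by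
  have key : ∀ S ≤ T, ∑ t ∈ Icc 1 S, c t * (a t - a (t + 1)) + c S * a (S + 1) ≤ c S * D := by
    intro S
    induction S with
    | zero => intro _; simpa using mul_le_mul_of_nonneg_left (haD 1 (by simp)) hc0
    | succ S ih =>
      intro hS
      rw [sum_Icc_succ_top (by omega)]
      have hcS : c S ≤ c (S + 1) := hc (Nat.le_succ S)
      have := mul_le_mul_of_nonneg_left (haD (S + 1) (by simp; omega)) (sub_nonneg.2 hcS)
      linarith [ih (by omega)]
  have := mul_nonneg (hc0.trans (hc (Nat.zero_le T))) ha0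
  linarith [key T le_rfl]

section InnerProductSpace

variable {E : Type*} [NormedAddCommGroup E] [InnerProductSpace ℝ E]

theorem norm_sub_le_of_forall_norm_sub_le {s : Set E} (hs : Convex ℝ s) {z p u : E}
    (hp : p ∈ s) (hmin : ∀ v ∈ s, ‖z - p‖ ≤ ‖z - v‖) (hu : u ∈ s) : ‖p - u‖ ≤ ‖z - u‖ := by
  have : Nonempty s := ⟨⟨p, hp⟩⟩
  have hinf : ‖z - p‖ = ⨅ v : s, ‖z - v‖ :=
    le_antisymm (le_ciInf fun v ↦ hmin v v.2)
      (ciInf_le ⟨0, Set.forall_mem_range.2 fun _ ↦ norm_nonneg _⟩ (⟨p, hp⟩ : s))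
  have hobtuse : ⟪z - p, u - p⟫ ≤ 0 := (norm_eq_iInf_iff_real_inner_le_zero hs hp).1 hinf u hu
  have hexp : ‖z - u‖ ^ 2 = ‖z - p‖ ^ 2 - 2 * ⟪z - p, u - p⟫ + ‖u - p‖ ^ 2 := by
    rw [← norm_sub_sq_real, sub_sub_sub_cancel_right]
  rw [← norm_neg, neg_sub]
  refine le_of_sq_le_sq ?_ (norm_nonneg _)
  nlinarith [sq_nonneg ‖z - p‖]

theorem ConvexOn.inner_gradient_le_sub [CompleteSpace E] {f : E → ℝ} {s : Set E}
    (hf : ConvexOn ℝ s f) {x y : E} (hx : x ∈ s) (hy : y ∈ s) (hfx : DifferentiableAt ℝ f x) :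
    ⟪gradient f x, y - x⟫ ≤ f y - f x := by
  let g : ℝ →ᵃ[ℝ] E := AffineMap.lineMap x y
  have hderiv : HasDerivAt (f ∘ g) ⟪gradient f x, y - x⟫ 0 := by
    have hf' : HasFDerivAt f (InnerProductSpace.toDual ℝ E (gradient f x)) (g 0) := by
      simpa [g] using hfx.hasGradientAt.hasFDerivAt
    simpa using hf'.comp_hasDerivAt 0 (AffineMap.hasDerivAt_lineMap (a := x) (b := y))
  have := (hf.comp_affineMap g).le_slope_of_hasDerivAt (x := 0) (y := 1)
    (by simpa [g]) (by simpa [g]) one_pos hderiv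
  simpa [slope, g] using this

theorem ConvexOn.sub_le_of_norm_sub_le_gradient_step [CompleteSpace E] {f : E → ℝ} {s : Set E}
    (hf : ConvexOn ℝ s f) {x u x' : E} (hx : x ∈ s) (hu : u ∈ s) (hfx : DifferentiableAt ℝ f x)
    {η : ℝ} (hη : 0 < η) (hx' : ‖x' - u‖ ≤ ‖x - η • gradient f x - u‖) :
    f x - f u ≤ (‖x - u‖ ^ 2 - ‖x' - u‖ ^ 2) / (2 * η) + η / 2 * ‖gradient f x‖ ^ 2 := by
  set g := gradient f x
  have hlin : f x - f u ≤ ⟪g, x - u⟫ := by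
    have := hf.inner_gradient_le_sub hx hu hfx
    rw [← neg_sub x u, inner_neg_right] at this
    linarith
  have hexp : ‖x - η • g - u‖ ^ 2 = ‖x - u‖ ^ 2 - 2 * η * ⟪g, x - u⟫ + η ^ 2 * ‖g‖ ^ 2 := by
    rw [sub_right_comm, norm_sub_sq_real, real_inner_smul_right, real_inner_comm, norm_smul,
      Real.norm_of_nonneg hη.le]
    ring
  have hsq : ‖x' - u‖ ^ 2 ≤ ‖x - η • g - u‖ ^ 2 := pow_le_pow_left₀ (norm_nonneg _) hx' 2
  rw [div_add' _ _ _ (by positivity), le_div_iff₀ (by positivity)]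
  nlinarith

theorem ConvexOn.sub_le_of_norm_sub_le_sqrt_step [CompleteSpace E] {f : E → ℝ} {s : Set E}
    (hf : ConvexOn ℝ s f) {x u x' : E} (hx : x ∈ s) (hu : u ∈ s) (hfx : DifferentiableAt ℝ f x)
    {G K t : ℝ} (hG : 0 < G) (hK : 0 < K) (ht : 0 < t) (hgrad : ‖gradient f x‖ ≤ G)
    (hx' : ‖x' - u‖ ≤ ‖x - (K / (G * √t)) • gradient f x - u‖) :
    f x - f u ≤ G * √t / (2 * K) * (‖x - u‖ ^ 2 - ‖x' - u‖ ^ 2) + G * K / 2 * (1 / √t) := by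
  have hsqrt : 0 < √t := Real.sqrt_pos.2 ht
  have hη : 0 < K / (G * √t) := by positivity
  have hstep := hf.sub_le_of_norm_sub_le_gradient_step hx hu hfx hη hx'
  have hdiv : (‖x - u‖ ^ 2 - ‖x' - u‖ ^ 2) / (2 * (K / (G * √t)))
      = G * √t / (2 * K) * (‖x - u‖ ^ 2 - ‖x' - u‖ ^ 2) := by
    field_simp
  have hgrad' : K / (G * √t) / 2 * ‖gradient f x‖ ^ 2 ≤ G * K / 2 * (1 / √t) :=
    calc K / (G * √t) / 2 * ‖gradient f x‖ ^ 2
        ≤ K / (G * √t) / 2 * G ^ 2 := by gcongr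
      _ = G * K / 2 * (1 / √t) := by field_simp
  linarith

end InnerProductSpace

theorem stmt15_general {n : ℕ} (V : Set (EuclideanSpace ℝ (Fin n)))
    (hVconv : Convex ℝ V)
    (K : ℝ) (hK : ∀ u ∈ V, ∀ v ∈ V, ‖u - v‖ ≤ K)
    (T : ℕ) (ℓ : ℕ → EuclideanSpace ℝ (Fin n) → ℝ)
    (G : ℝ) (hG : 0 < G)
    (hconv : ∀ t ∈ Finset.Icc 1 T, ConvexOn ℝ V (ℓ t))
    (hdiff : ∀ t ∈ Finset.Icc 1 T, ∃ U : Set (EuclideanSpace ℝ (Fin n)),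
      IsOpen U ∧ V ⊆ U ∧ ∀ x ∈ U, DifferentiableAt ℝ (ℓ t) x)
    (hgrad : ∀ t ∈ Finset.Icc 1 T, ∀ x ∈ V, ‖gradient (ℓ t) x‖ ≤ G)
    (proj : EuclideanSpace ℝ (Fin n) → EuclideanSpace ℝ (Fin n))
    (hproj : ∀ z, proj z ∈ V ∧ ∀ v ∈ V, ‖z - proj z‖ ≤ ‖z - v‖)
    (w : ℕ → EuclideanSpace ℝ (Fin n)) (hw1 : w 1 ∈ V)
    (hiter : ∀ t ∈ Finset.Icc 1 T,
      w (t + 1) = proj (w t - (K / (G * Real.sqrt t)) • gradient (ℓ t) (w t))) :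
    ∀ u ∈ V, ∑ t ∈ Finset.Icc 1 T, (ℓ t (w t) - ℓ t u)
      ≤ (3 / 2) * G * K * Real.sqrt T := by
  intro u hu
  have hwV : ∀ t ∈ Icc 1 (T + 1), w t ∈ V := by
    rintro (_ | _ | t) ht
    · simp at ht
    · exact hw1
    · rw [hiter (t + 1) (by simp at ht ⊢; omega)]
      exact (hproj _).1
  have hwV' : ∀ t ∈ Icc 1 T, w t ∈ V := fun t ht ↦ hwV t (Icc_subset_Icc_right T.le_succ ht)
  obtain hK0 | hKpos := (norm_nonneg _ |>.trans (hK u hu u hu)).eq_or_lt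
  · have hwu : ∀ t ∈ Icc 1 T, w t = u := fun t ht ↦
      norm_sub_eq_zero_iff.1 <| le_antisymm (hK0 ▸ hK _ (hwV' t ht) u hu) (norm_nonneg _)
    rw [sum_eq_zero fun t ht ↦ by rw [hwu t ht, sub_self], ← hK0]
    simp
  set c : ℕ → ℝ := fun t ↦ G * √(t : ℝ) / (2 * K)
  have hstep : ∀ t ∈ Icc 1 T, ℓ t (w t) - ℓ t u ≤
      c t * (‖w t - u‖ ^ 2 - ‖w (t + 1) - u‖ ^ 2) + G * K / 2 * (1 / √(t : ℝ)) := by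
    intro t ht
    obtain ⟨U, -, hVU, hUdiff⟩ := hdiff t ht
    refine (hconv t ht).sub_le_of_norm_sub_le_sqrt_step (hwV' t ht) hu
      (hUdiff _ (hVU (hwV' t ht))) hG hKpos (by simp at ht; exact_mod_cast ht.1)
      (hgrad t ht _ (hwV' t ht)) ?_
    rw [hiter t ht]
    exact norm_sub_le_of_forall_norm_sub_le hVconv (hproj _).1 (hproj _).2 hu
  calc ∑ t ∈ Icc 1 T, (ℓ t (w t) - ℓ t u)
      ≤ ∑ t ∈ Icc 1 T, (c t * (‖w t - u‖ ^ 2 - ‖w (t + 1) - u‖ ^ 2)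
          + G * K / 2 * (1 / √(t : ℝ))) := sum_le_sum hstep
    _ = ∑ t ∈ Icc 1 T, c t * (‖w t - u‖ ^ 2 - ‖w (t + 1) - u‖ ^ 2)
          + G * K / 2 * ∑ t ∈ Icc 1 T, 1 / √(t : ℝ) := by rw [sum_add_distrib, mul_sum]
    _ ≤ c T * K ^ 2 + G * K / 2 * (2 * √(T : ℝ)) := by
      gcongr
      · refine sum_Icc_mul_sub_succ_le (fun a b hab ↦ ?_) (by simp [c]) (fun t ht ↦ ?_)
          (by positivity)
        · simp only [c]; gcongr
        · exact pow_le_pow_left₀ (norm_nonneg _) (hK _ (hwV t ht) u hu) 2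
      · exact sum_Icc_one_div_sqrt_le T
    _ = 3 / 2 * G * K * √(T : ℝ) := by
      simp only [c]
      field_simp
      ring

theorem stmt15 {n : ℕ} (V : Set (EuclideanSpace ℝ (Fin n)))
    (hVne : V.Nonempty) (hVcl : IsClosed V) (hVconv : Convex ℝ V)
    (K : ℝ) (hK : ∀ u ∈ V, ∀ v ∈ V, ‖u - v‖ ≤ K)
    (T : ℕ) (ℓ : ℕ → EuclideanSpace ℝ (Fin n) → ℝ)
    (G : ℝ) (hG : 0 < G)
    (hconv : ∀ t ∈ Finset.Icc 1 T, ConvexOn ℝ V (ℓ t))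
    (hdiff : ∀ t ∈ Finset.Icc 1 T, ∃ U : Set (EuclideanSpace ℝ (Fin n)),
      IsOpen U ∧ V ⊆ U ∧ ∀ x ∈ U, DifferentiableAt ℝ (ℓ t) x)
    (hgrad : ∀ t ∈ Finset.Icc 1 T, ∀ x ∈ V, ‖gradient (ℓ t) x‖ ≤ G)
    (proj : EuclideanSpace ℝ (Fin n) → EuclideanSpace ℝ (Fin n))
    (hproj : ∀ z, proj z ∈ V ∧ ∀ v ∈ V, ‖z - proj z‖ ≤ ‖z - v‖)
    (w : ℕ → EuclideanSpace ℝ (Fin n)) (hw1 : w 1 ∈ V)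
    (hiter : ∀ t ∈ Finset.Icc 1 T,
      w (t + 1) = proj (w t - (K / (G * Real.sqrt t)) • gradient (ℓ t) (w t))) :
    ∀ u ∈ V, ∑ t ∈ Finset.Icc 1 T, (ℓ t (w t) - ℓ t u)
      ≤ (3 / 2) * G * K * Real.sqrt T :=
  stmt15_general V hVconv K hK T ℓ G hG hconv hdiff hgrad proj hproj w hw1 hiter
end
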